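/- arXiv:1805.05310 — 2 statements merged into one kernel-verified Lean document; each statement's English description precedes it below -/
import Mathlib

section
/- The multicenter vector field $Z = \sum_{j=1}^p \left(-y_j\,\partial/\partial x_j + x_j\,\partial/\partial y_j\right)$ on $\mathbb{R}^{2p}$ ($p \geq 1$) has no real formal separatrix at the origin: there is no nonzero tuple $\gamma \in (t\mathbb{R}[[t]])^{2p}$ and $h \in \mathbb{R}[[t]]$ with $Z(\gamma(t)) = h(t)\,\gamma'(t)$. -/
/-!
The multicenter field decouples into the planar rotations `-y ∂/∂x + x ∂/∂y`, one per pair of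
coordinates, so it suffices to treat a single pair `(a, b)`. Along a separatrix `a² + b²` is a
first integral: `h · (a² + b²)' = 2h(a a' + b b') = 2(-ab + ba) = 0`. If `h = 0` the equations
force `a = b = 0` at once; otherwise `a² + b²` is constant, hence zero because `a` and `b` have no
constant term. Over a formally real ring a sum of two squares of power series vanishes only if
both do: after dividing out the largest power of `X` dividing both, the constant terms would
give a vanishing sum of two squares that are not both zero.
-/

open PowerSeries

theorem Derivation.mul_map_mul_self_add_mul_self_eq_zero {R A : Type*} [CommRing R] [CommRing A]
    [Algebra R A] (D : Derivation R A A) {a b h : A} (hb : -b = h * D a) (ha : a = h * D b) :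
    h * D (a * a + b * b) = 0 := by
  rw [map_add, D.leibniz, D.leibniz, smul_eq_mul, smul_eq_mul]
  linear_combination (-2 * a) * hb - (2 * b) * ha

theorem IsFormallyReal.eq_zero_of_mul_self_add_mul_self_eq_zero {R : Type*} [CommRing R]
    [IsFormallyReal R] {x y : R} (h : x * x + y * y = 0) : x = 0 := by
  have hx : x * x = 0 := eq_zero_of_add_right (.mul_self x) (.mul_self y) h
  exact IsReduced.eq_zero x ⟨2, by rw [pow_two, hx]⟩

namespace PowerSeries

variable {R : Type*} [CommRing R] [IsFormallyReal R]

theorem X_dvd_of_mul_self_add_mul_self_eq_zero {a b : R⟦X⟧} (h : a * a + b * b = 0) : X ∣ a := by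
  rw [X_dvd_iff]
  refine IsFormallyReal.eq_zero_of_mul_self_add_mul_self_eq_zero (y := constantCoeff b) ?_
  simpa using congrArg constantCoeff h

theorem eq_zero_of_mul_self_add_mul_self_eq_zero {a b : R⟦X⟧} (h : a * a + b * b = 0) : a = 0 := by
  suffices hdvd : ∀ n, X ^ n ∣ a ∧ X ^ n ∣ b by
    ext n
    exact X_pow_dvd_iff.mp (hdvd (n + 1)).1 n n.lt_succ_self
  intro n
  induction n with
  | zero => simp
  | succ n ih =>
    obtain ⟨⟨a', rfl⟩, ⟨b', rfl⟩⟩ := ih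
    have h' : a' * a' + b' * b' = 0 := by
      apply X_pow_mul_injective (k := n + n)
      linear_combination h
    rw [pow_succ]
    exact ⟨mul_dvd_mul_left _ (X_dvd_of_mul_self_add_mul_self_eq_zero h'),
      mul_dvd_mul_left _ (X_dvd_of_mul_self_add_mul_self_eq_zero (by rwa [add_comm] at h'))⟩

theorem separatrix_of_linear_center_eq_zero [IsDomain R] [IsAddTorsionFree R] {a b h : R⟦X⟧}
    (ha₀ : constantCoeff a = 0) (hb₀ : constantCoeff b = 0)
    (hb : -b = h * d⁄dX R a) (ha : a = h * d⁄dX R b) : a = 0 ∧ b = 0 := by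
  rcases eq_or_ne h 0 with rfl | hh
  · simp_all
  have hconst : d⁄dX R (a * a + b * b) = 0 :=
    (mul_eq_zero.mp ((d⁄dX R).mul_map_mul_self_add_mul_self_eq_zero hb ha)).resolve_left hh
  have hsq : a * a + b * b = 0 := derivative.ext (by rw [hconst, map_zero]) (by simp [ha₀, hb₀])
  exact ⟨eq_zero_of_mul_self_add_mul_self_eq_zero hsq,
    eq_zero_of_mul_self_add_mul_self_eq_zero ((add_comm _ _).trans hsq)⟩

end PowerSeries

theorem multicenter_has_no_real_formal_separatrix_general (p : ℕ)
    (γ : Fin p → PowerSeries ℝ × PowerSeries ℝ) (h : PowerSeries ℝ)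
    (hconst : ∀ j, constantCoeff (γ j).1 = 0 ∧ constantCoeff (γ j).2 = 0)
    (heq : ∀ j, -(γ j).2 = h * derivativeFun (γ j).1 ∧
      (γ j).1 = h * derivativeFun (γ j).2) :
    ∀ j, (γ j).1 = 0 ∧ (γ j).2 = 0 := fun j =>
  separatrix_of_linear_center_eq_zero (hconst j).1 (hconst j).2 (heq j).1 (heq j).2

/-- The multicenter vector field `Z = ∑ⱼ (-yⱼ ∂/∂xⱼ + xⱼ ∂/∂yⱼ)` on `ℝ^{2p}`
(`p ≥ 1`) has no real formal separatrix at the origin: if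
`γ = (γⱼ¹, γⱼ²)_{j}` is a tuple of formal power series with zero constant
terms and `h ∈ ℝ[[t]]` satisfies `Z(γ(t)) = h(t) γ'(t)` componentwise, i.e.
`-γⱼ² = h (γⱼ¹)'` and `γⱼ¹ = h (γⱼ²)'` for every `j`, then `γ = 0`. -/
theorem multicenter_has_no_real_formal_separatrix (p : ℕ) (hp : 0 < p)
    (γ : Fin p → PowerSeries ℝ × PowerSeries ℝ) (h : PowerSeries ℝ)
    (hconst : ∀ j, constantCoeff (γ j).1 = 0 ∧ constantCoeff (γ j).2 = 0)
    (heq : ∀ j, -(γ j).2 = h * derivativeFun (γ j).1 ∧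
      (γ j).1 = h * derivativeFun (γ j).2) :
    ∀ j, (γ j).1 = 0 ∧ (γ j).2 = 0 :=
  multicenter_has_no_real_formal_separatrix_general p γ h hconst heq
end

section
/- Let $\ell_1,\ell_2,\ell_3$ be linearly independent linear forms on $\mathbb{R}^3$, $m_1,m_2,m_3 > 0$ integers, $K = \{\ell_1,\ell_2,\ell_3 > 0\}$, and $F = \ell_1^{2m_1}\ell_2^{2m_2}\ell_3^{2m_3}$ restricted to $\mathbb{S}^2 \cap K$. Then $F$ attains a maximum on $\mathbb{S}^2 \cap \overline{K}$ at a point of $\mathbb{S}^2 \cap K$, and any critical point $\nu_0$ of $F|_{\mathbb{S}^2 \cap K}$ is a global maximum of $F$ on $\mathbb{S}^2 \cap K$; in particular $F|_{\mathbb{S}^2\cap K}$ has exactly one critical point. -/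
/-!
Write `F = ∏ ℓᵢ ^ nᵢ` and `d = ∑ nᵢ`. At a critical point `ν` of `F` on the unit sphere inside the
cone, `dF(ν) = λ ⟪ν, ·⟫`, and evaluating at `ν` gives `λ = d F(ν)`; hence
`∑ nᵢ ℓᵢ(x) / ℓᵢ(ν) = d ⟪ν, x⟫` for every `x`. Weighted AM-GM for the ratios `ℓᵢ(x) / ℓᵢ(ν)` then
gives `F(x) ≤ ⟪ν, x⟫ ^ d F(ν)` on the closed cone, and `⟪ν, x⟫ < 1` for a unit vector `x ≠ ν`:
every critical point is a strict global maximum, so there is at most one. A critical point exists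
because `F` vanishes on the boundary of the cone, so its maximum over the compact set
`𝕊² ∩ K̄` lies in `K`, where Lagrange multipliers apply.
-/

open Finset Metric InnerProductSpace
open scoped RealInnerProductSpace

theorem Real.prod_pow_le_weighted_mean_pow {ι : Type*} (s : Finset ι) (w : ι → ℕ) (z : ι → ℝ)
    (hw : 0 < ∑ i ∈ s, w i) (hz : ∀ i ∈ s, 0 ≤ z i) :
    ∏ i ∈ s, z i ^ w i ≤ ((∑ i ∈ s, w i * z i) / ∑ i ∈ s, w i) ^ ∑ i ∈ s, w i := by
  have hw' : (0 : ℝ) < ∑ i ∈ s, (w i : ℝ) := by exact_mod_cast hw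
  have hmean := Real.geom_mean_le_arith_mean s (fun i => (w i : ℝ)) z (fun i _ => by positivity)
    hw' hz
  rw [Real.rpow_inv_le_iff_of_pos (prod_nonneg fun i hi => Real.rpow_nonneg (hz i hi) _)
    (div_nonneg (sum_nonneg fun i hi => mul_nonneg (Nat.cast_nonneg _) (hz i hi)) hw'.le) hw']
    at hmean
  simpa only [Real.rpow_natCast, ← Nat.cast_sum] using hmean

theorem Module.exists_forall_apply_eq_one_of_linearIndependent {ι K V : Type*} [Field K]
    [AddCommGroup V] [Module K V] [FiniteDimensional K V] {ℓ : ι → Module.Dual K V}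
    (h : LinearIndependent K ℓ) : ∃ x : V, ∀ i, ℓ i x = 1 := by
  obtain ⟨φ, hφ⟩ := Module.exists_dual_forall_apply_eq_one (h.linearIndepOn (s := Set.univ))
  exact ⟨(Module.evalEquiv K V).symm φ, fun i => by simpa using hφ i (Set.mem_univ i)⟩

theorem exists_norm_eq_one_forall_pos_of_linearIndependent {V ι : Type*} [NormedAddCommGroup V]
    [NormedSpace ℝ V] [FiniteDimensional ℝ V] [Nonempty ι] {ℓ : ι → Module.Dual ℝ V}
    (h : LinearIndependent ℝ ℓ) : ∃ x : V, ‖x‖ = 1 ∧ ∀ i, 0 < ℓ i x := by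
  obtain ⟨x, hx⟩ := Module.exists_forall_apply_eq_one_of_linearIndependent h
  have hx₀ : x ≠ 0 := by
    rintro rfl
    simpa using hx (Classical.arbitrary ι)
  refine ⟨‖x‖⁻¹ • x, norm_smul_inv_norm hx₀, fun i => ?_⟩
  rw [map_smul, hx, smul_eq_mul, mul_one]
  exact inv_pos.2 (norm_pos_iff.2 hx₀)

variable {E : Type*} [NormedAddCommGroup E] [InnerProductSpace ℝ E]

theorem exists_gradient_eq_smul_of_isLocalExtrOn_sphere [CompleteSpace E] {f : E → ℝ}
    {f' : StrongDual ℝ E} {x : E} (hx : x ≠ 0) (hextr : IsLocalExtrOn f (sphere 0 ‖x‖) x)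
    (hf : HasStrictFDerivAt f f' x) : ∃ c : ℝ, gradient f x = c • x := by
  have hextr' : IsLocalExtrOn f {y | ‖y‖ ^ 2 = ‖x‖ ^ 2} x := by
    convert hextr using 2
    ext y
    simp
  obtain ⟨a, b, hab, hsum⟩ := hextr'.exists_multipliers_of_hasStrictFDerivAt_1d
    (hasStrictFDerivAt_norm_sq x) hf
  have hb : b ≠ 0 := by
    rintro rfl
    have ha : a ≠ 0 := by simpa using hab
    have := congrArg (fun g => g x) hsum
    simp [ha, hx] at this
  refine ⟨-(2 * a / b), ?_⟩
  have hf' : toDual ℝ E (-(2 * a / b) • x) = f' := by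
    ext y
    have hy := congrArg (fun g : StrongDual ℝ E => g y) hsum
    simp only [add_apply, smul_apply, innerSL_apply_apply,
      zero_apply, smul_eq_mul, nsmul_eq_mul, Nat.cast_ofNat] at hy
    rw [toDual_apply_apply, real_inner_smul_left]
    field_simp
    linear_combination -hy
  exact HasGradientAt.gradient ((hasGradientAt_iff_hasFDerivAt).2 (hf' ▸ hf.hasFDerivAt))

section FormMonomial

variable {ι : Type*} [Fintype ι] (ℓ : ι → StrongDual ℝ E) (n : ι → ℕ)

noncomputable def formMonomial (x : E) : ℝ := ∏ i, ℓ i x ^ n i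

variable {ℓ n}

theorem formMonomial_pos {x : E} (hx : ∀ i, 0 < ℓ i x) : 0 < formMonomial ℓ n x :=
  prod_pos fun i _ => pow_pos (hx i) _

theorem continuous_formMonomial : Continuous (formMonomial ℓ n) :=
  continuous_finsetProd _ fun i _ => (ℓ i).continuous.pow _

theorem exists_isMaxOn_formMonomial {A : Set E} (hA : IsCompact A) (hn : ∀ i, n i ≠ 0)
    (hAK : (A ∩ {x | ∀ i, 0 < ℓ i x}).Nonempty) :
    ∃ ν ∈ A ∩ {x | ∀ i, 0 < ℓ i x}, IsMaxOn (formMonomial ℓ n) (A ∩ {x | ∀ i, 0 ≤ ℓ i x}) ν := by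
  have hclosed : IsClosed {x : E | ∀ i, 0 ≤ ℓ i x} := by
    simpa only [Set.ofPred_forall] using
      isClosed_iInter fun i => isClosed_le continuous_const (ℓ i).continuous
  obtain ⟨x₀, hx₀A, hx₀K⟩ := hAK
  obtain ⟨ν, ⟨hνA, hνK⟩, hmax⟩ := (hA.inter_right hclosed).exists_isMaxOn
    ⟨x₀, hx₀A, fun i => (hx₀K i).le⟩ (continuous_formMonomial (ℓ := ℓ) (n := n)).continuousOn
  have hFν : 0 < formMonomial ℓ n ν :=
    (formMonomial_pos hx₀K).trans_le (hmax ⟨hx₀A, fun i => (hx₀K i).le⟩)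
  refine ⟨ν, ⟨hνA, fun i => (hνK i).lt_of_ne fun hi => hFν.ne' ?_⟩, hmax⟩
  exact prod_eq_zero (mem_univ i) (by rw [← hi, zero_pow (hn i)] : ℓ i ν ^ n i = 0)

theorem hasStrictFDerivAt_formMonomial {x : E} (hx : ∀ i, ℓ i x ≠ 0) :
    HasStrictFDerivAt (formMonomial ℓ n) (formMonomial ℓ n x • ∑ i, (n i / ℓ i x) • ℓ i) x := by
  classical
  have hpow : ∀ i ∈ univ, HasStrictFDerivAt (fun y => ℓ i y ^ n i)
      ((n i * ℓ i x ^ (n i - 1)) • ℓ i) x := fun i _ =>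
    (hasStrictDerivAt_pow (n i) (ℓ i x)).comp_hasStrictFDerivAt x (ℓ i).hasStrictFDerivAt
  refine (HasStrictFDerivAt.finsetProd hpow).congr_fderiv ?_
  rw [smul_sum]
  refine sum_congr rfl fun i hi => ?_
  rw [smul_smul, smul_smul]
  congr 1
  rw [formMonomial, ← mul_prod_erase univ _ hi]
  rcases Nat.eq_zero_or_pos (n i) with h | h
  · simp [h]
  · rw [pow_sub₀ _ (hx i) h, pow_one]
    field_simp

theorem sum_mul_div_eq_inner_of_gradient_formMonomial_eq_smul [CompleteSpace E] {ν : E} {c : ℝ}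
    (hν : ‖ν‖ = 1) (hνℓ : ∀ i, ℓ i ν ≠ 0) (hc : gradient (formMonomial ℓ n) ν = c • ν) (y : E) :
    ∑ i, n i * (ℓ i y / ℓ i ν) = (∑ i, n i : ℕ) * ⟪ν, y⟫ := by
  have hD := (hasStrictFDerivAt_formMonomial (n := n) hνℓ).hasFDerivAt
  have hdual := (toDual ℝ E).symm_apply_eq.1 (hD.hasGradientAt.gradient.symm.trans hc)
  have hderiv : ∀ z, formMonomial ℓ n ν * ∑ i, n i * (ℓ i z / ℓ i ν) = c * ⟪ν, z⟫ := by
    intro z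
    have := congrArg (fun g : StrongDual ℝ E => g z) hdual
    simpa [toDual_apply_apply, real_inner_smul_left, mul_div_assoc', div_mul_eq_mul_div] using this
  have hP : formMonomial ℓ n ν ≠ 0 := prod_ne_zero_iff.2 fun i _ => pow_ne_zero _ (hνℓ i)
  have hc' : c = formMonomial ℓ n ν * (∑ i, n i : ℕ) := by
    have := hderiv ν
    simp only [div_self (hνℓ _), mul_one, real_inner_self_eq_norm_sq, hν] at this
    push_cast
    linarith
  apply mul_left_cancel₀ hP
  rw [hderiv, hc']
  ring

variable [CompleteSpace E] {ν x : E} {c : ℝ}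

theorem inner_nonneg_of_gradient_formMonomial_eq_smul (hn : 0 < ∑ i, n i) (hν : ‖ν‖ = 1)
    (hνℓ : ∀ i, 0 < ℓ i ν) (hc : gradient (formMonomial ℓ n) ν = c • ν) (hx : ∀ i, 0 ≤ ℓ i x) :
    0 ≤ ⟪ν, x⟫ := by
  have hsum :=
    sum_mul_div_eq_inner_of_gradient_formMonomial_eq_smul hν (fun i => (hνℓ i).ne') hc x
  have hnonneg : 0 ≤ ∑ i, n i * (ℓ i x / ℓ i ν) :=
    sum_nonneg fun i _ => mul_nonneg (Nat.cast_nonneg _) (div_nonneg (hx i) (hνℓ i).le)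
  rw [hsum] at hnonneg
  exact nonneg_of_mul_nonneg_right hnonneg (by exact_mod_cast hn)

theorem formMonomial_le_inner_pow_mul_of_gradient_eq_smul (hn : 0 < ∑ i, n i) (hν : ‖ν‖ = 1)
    (hνℓ : ∀ i, 0 < ℓ i ν) (hc : gradient (formMonomial ℓ n) ν = c • ν) (hx : ∀ i, 0 ≤ ℓ i x) :
    formMonomial ℓ n x ≤ ⟪ν, x⟫ ^ (∑ i, n i) * formMonomial ℓ n ν := by
  have hPν := formMonomial_pos (n := n) hνℓ
  have hamgm := Real.prod_pow_le_weighted_mean_pow univ n (fun i => ℓ i x / ℓ i ν) hn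
    fun i _ => div_nonneg (hx i) (hνℓ i).le
  rw [sum_mul_div_eq_inner_of_gradient_formMonomial_eq_smul hν (fun i => (hνℓ i).ne') hc x,
    mul_div_cancel_left₀ _ (by exact_mod_cast hn.ne'), prod_congr rfl fun i _ => div_pow _ _ _,
    prod_div_distrib] at hamgm
  rw [← div_le_iff₀ hPν]
  exact hamgm

theorem formMonomial_lt_of_gradient_eq_smul (hn : 0 < ∑ i, n i) (hν : ‖ν‖ = 1)
    (hνℓ : ∀ i, 0 < ℓ i ν) (hc : gradient (formMonomial ℓ n) ν = c • ν) (hx₁ : ‖x‖ = 1)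
    (hx : ∀ i, 0 ≤ ℓ i x) (hxν : x ≠ ν) :
    formMonomial ℓ n x < formMonomial ℓ n ν := by
  have hinner : ⟪ν, x⟫ < 1 := (inner_lt_one_iff_real_of_norm_eq_one hν hx₁).2 hxν.symm
  calc formMonomial ℓ n x ≤ ⟪ν, x⟫ ^ (∑ i, n i) * formMonomial ℓ n ν :=
        formMonomial_le_inner_pow_mul_of_gradient_eq_smul hn hν hνℓ hc hx
    _ < formMonomial ℓ n ν := mul_lt_of_lt_one_left (formMonomial_pos hνℓ) <|
        pow_lt_one₀ (inner_nonneg_of_gradient_formMonomial_eq_smul hn hν hνℓ hc hx) hinner hn.ne'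

theorem isMaxOn_formMonomial_of_gradient_eq_smul (hn : 0 < ∑ i, n i) (hν : ‖ν‖ = 1)
    (hνℓ : ∀ i, 0 < ℓ i ν) (hc : gradient (formMonomial ℓ n) ν = c • ν) :
    IsMaxOn (formMonomial ℓ n) (sphere 0 1 ∩ {x | ∀ i, 0 ≤ ℓ i x}) ν := by
  refine isMaxOn_iff.2 fun x ⟨hx₁, hx⟩ => ?_
  rcases eq_or_ne x ν with rfl | hxν
  · exact le_rfl
  · exact (formMonomial_lt_of_gradient_eq_smul hn hν hνℓ hc (mem_sphere_zero_iff_norm.1 hx₁) hx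
      hxν).le

theorem eq_of_gradient_formMonomial_eq_smul {ν₁ ν₂ : E} {c₁ c₂ : ℝ} (hn : 0 < ∑ i, n i)
    (hν₁ : ‖ν₁‖ = 1) (hν₁ℓ : ∀ i, 0 < ℓ i ν₁) (hc₁ : gradient (formMonomial ℓ n) ν₁ = c₁ • ν₁)
    (hν₂ : ‖ν₂‖ = 1) (hν₂ℓ : ∀ i, 0 < ℓ i ν₂) (hc₂ : gradient (formMonomial ℓ n) ν₂ = c₂ • ν₂) :
    ν₁ = ν₂ := by
  by_contra hne
  exact lt_asymm
    (formMonomial_lt_of_gradient_eq_smul hn hν₁ hν₁ℓ hc₁ hν₂ (fun i => (hν₂ℓ i).le) (Ne.symm hne))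
    (formMonomial_lt_of_gradient_eq_smul hn hν₂ hν₂ℓ hc₂ hν₁ (fun i => (hν₁ℓ i).le) hne)

theorem exists_gradient_formMonomial_eq_smul_of_isMaxOn (hν : ‖ν‖ = 1) (hνℓ : ∀ i, 0 < ℓ i ν)
    (hmax : IsMaxOn (formMonomial ℓ n) (sphere 0 1 ∩ {x | ∀ i, 0 < ℓ i x}) ν) :
    ∃ c : ℝ, gradient (formMonomial ℓ n) ν = c • ν := by
  have hopen : IsOpen {x : E | ∀ i, 0 < ℓ i x} := by
    simpa only [Set.ofPred_forall] using
      isOpen_iInter_of_finite fun i => isOpen_lt continuous_const (ℓ i).continuous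
  have hlocal : IsLocalMaxOn (formMonomial ℓ n) (sphere 0 ‖ν‖) ν := by
    have := hmax.localize
    rwa [IsLocalMaxOn, nhdsWithin_inter_of_mem' (mem_nhdsWithin_of_mem_nhds
      (hopen.mem_nhds hνℓ)), ← hν] at this
  exact exists_gradient_eq_smul_of_isLocalExtrOn_sphere (norm_ne_zero_iff.1 (hν ▸ one_ne_zero))
    (.inr hlocal) (hasStrictFDerivAt_formMonomial fun i => (hνℓ i).ne')

end FormMonomial

/-- Let `ℓ₁, ℓ₂, ℓ₃` be linearly independent linear forms on `ℝ³`,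
`m₁, m₂, m₃ > 0` integers, `K = {ℓ₁, ℓ₂, ℓ₃ > 0}` and
`F = ℓ₁^{2m₁} ℓ₂^{2m₂} ℓ₃^{2m₃}`. Then `F` attains a maximum on `𝕊² ∩ K̄` at a
point of `𝕊² ∩ K`; every critical point of `F|_{𝕊² ∩ K}` (a point where the
gradient of `F` is proportional to the point) is a global maximum of `F` on
`𝕊² ∩ K`; and `F|_{𝕊² ∩ K}` has exactly one critical point. -/
theorem sphere_restriction_unique_critical_point
    (ℓ : Fin 3 → (EuclideanSpace ℝ (Fin 3) →ₗ[ℝ] ℝ))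
    (hind : LinearIndependent ℝ ℓ) (m : Fin 3 → ℕ) (hm : ∀ i, 0 < m i) :
    let S := Metric.sphere (0 : EuclideanSpace ℝ (Fin 3)) 1
    let K := {x : EuclideanSpace ℝ (Fin 3) | ∀ i, 0 < ℓ i x}
    let Kbar := {x : EuclideanSpace ℝ (Fin 3) | ∀ i, 0 ≤ ℓ i x}
    let F : EuclideanSpace ℝ (Fin 3) → ℝ := fun x => ∏ i, (ℓ i x) ^ (2 * m i)
    (∃ ν₀ ∈ S ∩ K, IsMaxOn F (S ∩ Kbar) ν₀) ∧
    (∀ ν₀ ∈ S ∩ K, (∃ lam : ℝ, gradient F ν₀ = lam • ν₀) →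
      IsMaxOn F (S ∩ K) ν₀) ∧
    (∃! ν₀, ν₀ ∈ S ∩ K ∧ ∃ lam : ℝ, gradient F ν₀ = lam • ν₀) := by
  intro S K Kbar F
  let L : Fin 3 → StrongDual ℝ (EuclideanSpace ℝ (Fin 3)) := fun i => (ℓ i).toContinuousLinearMap
  have hF : F = formMonomial L (fun i => 2 * m i) := rfl
  have hn : ∀ i, 2 * m i ≠ 0 := fun i => mul_ne_zero two_ne_zero (hm i).ne'
  have hd : 0 < ∑ i, 2 * m i := sum_pos (fun i _ => Nat.pos_of_ne_zero (hn i)) univ_nonempty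
  have hKKbar : S ∩ K ⊆ S ∩ Kbar := Set.inter_subset_inter_right _ fun x hx i => (hx i).le
  obtain ⟨x, hx, hxK⟩ := exists_norm_eq_one_forall_pos_of_linearIndependent hind
  rw [hF]
  obtain ⟨ν₀, hν₀, hmax⟩ := exists_isMaxOn_formMonomial (ℓ := L) (isCompact_sphere 0 1) hn
    ⟨x, mem_sphere_zero_iff_norm.2 hx, hxK⟩
  obtain ⟨c₀, hc₀⟩ := exists_gradient_formMonomial_eq_smul_of_isMaxOn
    (mem_sphere_zero_iff_norm.1 hν₀.1) hν₀.2 (hmax.on_subset hKKbar)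
  refine ⟨⟨ν₀, hν₀, hmax⟩, fun ν hν ⟨c, hc⟩ => ?_, ⟨ν₀, ⟨hν₀, c₀, hc₀⟩, fun ν ⟨hν, c, hc⟩ => ?_⟩⟩
  · exact (isMaxOn_formMonomial_of_gradient_eq_smul (ℓ := L) hd
      (mem_sphere_zero_iff_norm.1 hν.1) hν.2 hc).on_subset hKKbar
  · exact eq_of_gradient_formMonomial_eq_smul (ℓ := L) hd (mem_sphere_zero_iff_norm.1 hν.1) hν.2 hc
      (mem_sphere_zero_iff_norm.1 hν₀.1) hν₀.2 hc₀
end
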